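/- arXiv:2406.18477 — 5 statements merged into one kernel-verified Lean document; each statement's English description precedes it below -/
import Mathlib

section
/- Let r be a relational morphism from a finite semigroup S to a finite semigroup T, and let N be a subgroup of S such that N ⊆ t r⁻¹ for some t ∈ T. Then there exists an idempotent f ∈ T with N ⊆ f r⁻¹. Consequently, if 𝒱 is a class of finite semigroups and N is a 𝒱-pointlike subgroup of S, then for every T ∈ 𝒱 and every relational morphism r from S to T there is an idempotent f ∈ T with N ⊆ f r⁻¹. -/
open Pointwise

/-- A relational morphism between semigroups: a set-valued map with nonempty
values such that `r s₁ * r s₂ ⊆ r (s₁ * s₂)`. -/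
structure RelMorph (S T : Type) [Semigroup S] [Semigroup T] where
  toFun : S → Set T
  nonempty : ∀ s : S, (toFun s).Nonempty
  mul_subset : ∀ s₁ s₂ : S, toFun s₁ * toFun s₂ ⊆ toFun (s₁ * s₂)

/-- `t r⁻¹ = {s ∈ S : t ∈ r s}`. -/
def RelMorph.preim {S T : Type} [Semigroup S] [Semigroup T] (r : RelMorph S T) (t : T) :
    Set S := {s : S | t ∈ r.toFun s}

/-- `X ⊆ S` is `𝒱`-pointlike: for every finite semigroup `T` in `𝒱` and every
relational morphism `r : S → T` there is `t ∈ T` with `X ⊆ t r⁻¹`. -/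
def Pointlike (V : ∀ (T : Type) [Semigroup T] [Finite T], Prop)
    (S : Type) [Semigroup S] [Finite S] (X : Set S) : Prop :=
  ∀ (T : Type) [Semigroup T] [Finite T], V T → ∀ r : RelMorph S T, ∃ t : T, X ⊆ r.preim t

/-- `N` is a subgroup of the semigroup `S`: a subsemigroup which is a group
under the induced multiplication. -/
def IsSubgroupOf (S : Type) [Semigroup S] (N : Set S) : Prop :=
  (∀ a ∈ N, ∀ b ∈ N, a * b ∈ N) ∧
  ∃ e ∈ N, (∀ a ∈ N, e * a = a ∧ a * e = a) ∧ ∀ a ∈ N, ∃ b ∈ N, a * b = e ∧ b * a = e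

/-!
The elements `x : T` with `N ⊆ x r⁻¹` form a subsemigroup of `T`: if `e` is the identity of `N`,
then for `s ∈ N`, `x ∈ r s` and `y ∈ r e` we get `x * y ∈ r (s * e) = r s`. It is nonempty, since
it contains `t`, and a nonempty finite semigroup contains an idempotent (the Ellis–Numakura
lemma for the discrete topology).
-/

theorem exists_idempotent_in_finite_subsemigroup {M : Type*} [Semigroup M] [Finite M]
    {s : Set M} (hs : s.Nonempty) (hmul : ∀ x ∈ s, ∀ y ∈ s, x * y ∈ s) :
    ∃ m ∈ s, m * m = m := by
  let _ : TopologicalSpace M := ⊥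
  have : DiscreteTopology M := ⟨rfl⟩
  exact exists_idempotent_in_compact_subsemigroup (fun _ => continuous_of_discreteTopology)
    s hs s.toFinite.isCompact hmul

namespace RelMorph

variable {S T : Type} [Semigroup S] [Semigroup T] (r : RelMorph S T)

theorem mul_mem_of_mul_eq {s₁ s₂ s : S} (h : s₁ * s₂ = s) {x y : T} (hx : x ∈ r.toFun s₁)
    (hy : y ∈ r.toFun s₂) : x * y ∈ r.toFun s :=
  h ▸ r.mul_subset s₁ s₂ (Set.mul_mem_mul hx hy)

theorem subset_preim_mul {N : Set S} {e : S} (he : e ∈ N) (hright : ∀ s ∈ N, s * e = s)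
    {x y : T} (hx : N ⊆ r.preim x) (hy : N ⊆ r.preim y) : N ⊆ r.preim (x * y) :=
  fun s hs => r.mul_mem_of_mul_eq (hright s hs) (hx hs) (hy he)

end RelMorph

/-- a subgroup covered by some element of `T` under a relational morphism
is covered by an idempotent of `T`; consequently a `𝒱`-pointlike subgroup is always
covered by an idempotent. -/
theorem subgroup_covered_by_idempotent
    (S : Type) [Semigroup S] [Finite S] (N : Set S) (hN : IsSubgroupOf S N) :
    (∀ (T : Type) [Semigroup T] [Finite T] (r : RelMorph S T) (t : T),
        N ⊆ r.preim t → ∃ f : T, f * f = f ∧ N ⊆ r.preim f) ∧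
    (∀ V : ∀ (T : Type) [Semigroup T] [Finite T], Prop,
      Pointlike V S N →
        ∀ (T : Type) [Semigroup T] [Finite T], V T → ∀ r : RelMorph S T,
          ∃ f : T, f * f = f ∧ N ⊆ r.preim f) := by
  obtain ⟨-, e, he, hid, -⟩ := hN
  have cover : ∀ (T : Type) [Semigroup T] [Finite T] (r : RelMorph S T) (t : T),
      N ⊆ r.preim t → ∃ f : T, f * f = f ∧ N ⊆ r.preim f := by
    intro T _ _ r t ht
    obtain ⟨f, hf, hff⟩ := exists_idempotent_in_finite_subsemigroup (s := {x | N ⊆ r.preim x})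
      ⟨t, ht⟩ fun _ hx _ hy => r.subset_preim_mul he (fun s hs => (hid s hs).2) hx hy
    exact ⟨f, hff, hf⟩
  refine ⟨cover, fun V hV T _ _ hTV r => ?_⟩
  obtain ⟨t, ht⟩ := hV T hTV r
  exact cover T r t ht
end

section
/- Let S be a finite semigroup, e an idempotent of S, G_e the maximal subgroup of S at e, and 𝒱 any class of finite semigroups. Then there is a subgroup M of G_e such that: M is 𝒱-pointlike, M is normal in G_e, M contains every 𝒱-pointlike subgroup of G_e, and M equals the product of all normal subgroups of G_e that are 𝒱-pointlike. In particular, G_e has a unique maximal 𝒱-pointlike subgroup, and it is normal in G_e. -/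
open Pointwise

/-- The maximal subgroup `G_e` of `S` at the idempotent `e`: elements `x` with
`xe = ex = x` possessing an inverse relative to `e`. -/
def maxSubgroupAt (S : Type) [Semigroup S] (e : S) : Set S :=
  {x : S | x * e = x ∧ e * x = x ∧ ∃ y : S, y * e = y ∧ e * y = y ∧ x * y = e ∧ y * x = e}

/-- `N ⊆ G_e` is normal in `G_e`: closed under conjugation by elements of `G_e`. -/
def IsNormalInMaxSubgroup (S : Type) [Semigroup S] (e : S) (N : Set S) : Prop :=
  ∀ g ∈ maxSubgroupAt S e, ∀ y ∈ maxSubgroupAt S e,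
    g * y = e → y * g = e → ∀ m ∈ N, g * m * y ∈ N

/-!
Call a `𝒱`-pointlike subset of `G_e` containing `e` *admissible*. Products of
pointlike sets are pointlike, and a product of admissible sets contains each factor, so the
product `P` of all admissible sets (finitely many, as `S` is finite) is the greatest admissible
set. Then `P * P` and every conjugate `g P g⁻¹` are admissible, hence contained in `P`; a finite
multiplicatively closed subset of a group containing the identity is a subgroup, so `P` is a
normal subgroup. It contains every pointlike subgroup of `G_e`, and being itself a normal pointlike
subgroup, it is also the product of all of them.
-/

section MaxSubgroupAt

variable {S : Type} [Semigroup S] {e : S}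

lemma mem_maxSubgroupAt_self (he : e * e = e) : e ∈ maxSubgroupAt S e :=
  ⟨he, he, e, he, he, he, he⟩

lemma mul_mem_maxSubgroupAt {a b : S} (ha : a ∈ maxSubgroupAt S e)
    (hb : b ∈ maxSubgroupAt S e) : a * b ∈ maxSubgroupAt S e := by
  obtain ⟨hae, hea, a', ha'e, hea', haa', ha'a⟩ := ha
  obtain ⟨hbe, heb, b', hb'e, heb', hbb', hb'b⟩ := hb
  refine ⟨by rw [mul_assoc, hbe], by rw [← mul_assoc, hea], b' * a', by rw [mul_assoc, ha'e],
    by rw [← mul_assoc, heb'], ?_, ?_⟩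
  · rw [mul_assoc, ← mul_assoc b b' a', hbb', hea', haa']
  · rw [mul_assoc, ← mul_assoc a' a b, ha'a, heb, hb'b]

lemma mul_subset_maxSubgroupAt {A B : Set S} (hA : A ⊆ maxSubgroupAt S e)
    (hB : B ⊆ maxSubgroupAt S e) : A * B ⊆ maxSubgroupAt S e := by
  rintro _ ⟨a, ha, b, hb, rfl⟩
  exact mul_mem_maxSubgroupAt (hA ha) (hB hb)

lemma eq_of_mul_self_eq_of_mem_maxSubgroupAt {f : S} (hf : f ∈ maxSubgroupAt S e)
    (hff : f * f = f) : f = e := by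
  obtain ⟨hfe, -, y, -, -, hfy, -⟩ := hf
  calc f = f * e := hfe.symm
    _ = f * f * y := by rw [mul_assoc, hfy]
    _ = e := by rw [hff, hfy]

lemma left_cancel_of_mem_maxSubgroupAt {x a b : S} (hx : x ∈ maxSubgroupAt S e)
    (ha : a ∈ maxSubgroupAt S e) (hb : b ∈ maxSubgroupAt S e) (h : x * a = x * b) : a = b := by
  obtain ⟨-, -, y, -, -, -, hyx⟩ := hx
  rw [← ha.2.1, ← hb.2.1, ← hyx, mul_assoc, mul_assoc, h]

lemma subset_mul_left_of_subset_maxSubgroupAt {A B : Set S} (hA : A ⊆ maxSubgroupAt S e)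
    (hB : e ∈ B) : A ⊆ A * B := fun a ha => by
  simpa only [(hA ha).1] using Set.mul_mem_mul ha hB

lemma subset_mul_right_of_subset_maxSubgroupAt {A B : Set S} (hA : e ∈ A)
    (hB : B ⊆ maxSubgroupAt S e) : B ⊆ A * B := fun b hb => by
  simpa only [(hB hb).2.1] using Set.mul_mem_mul hA hb

lemma IsSubgroupOf.mem_of_subset_maxSubgroupAt {N : Set S} (hN : IsSubgroupOf S N)
    (hNG : N ⊆ maxSubgroupAt S e) : e ∈ N := by
  obtain ⟨-, f, hf, hid, -⟩ := hN
  rwa [← eq_of_mul_self_eq_of_mem_maxSubgroupAt (hNG hf) (hid f hf).1]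

/-- Left multiplication by `x` is injective on the finite set `K`, hence onto `K`, which
produces a right inverse of `x` in `K`; in the group `G_e` it is a two-sided inverse. -/
lemma isSubgroupOf_of_mul_mem [Finite S] {K : Set S} (hKG : K ⊆ maxSubgroupAt S e)
    (heK : e ∈ K) (hmul : ∀ a ∈ K, ∀ b ∈ K, a * b ∈ K) : IsSubgroupOf S K := by
  refine ⟨hmul, e, heK, fun a ha => ⟨(hKG ha).2.1, (hKG ha).1⟩, fun x hx => ?_⟩
  have hbij : Set.BijOn (x * ·) K K :=
    ((Set.toFinite K).injOn_iff_bijOn_of_mapsTo fun k hk => hmul x hx k hk).mp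
      fun a ha b hb h => left_cancel_of_mem_maxSubgroupAt (hKG hx) (hKG ha) (hKG hb) h
  obtain ⟨b, hb, hxb : x * b = e⟩ := hbij.surjOn heK
  obtain ⟨-, -, y, hye, -, -, hyx⟩ := hKG hx
  have hby : b = y := by
    calc b = y * (x * b) := by rw [← mul_assoc, hyx, (hKG hb).2.1]
      _ = y := by rw [hxb, hye]
  exact ⟨b, hb, hxb, hby ▸ hyx⟩

lemma subset_foldl_mul_of_subset_maxSubgroupAt (he : e * e = e)
    {A : Set S} {l : List (Set S)} (hl : ∀ N ∈ A :: l, N ⊆ maxSubgroupAt S e ∧ e ∈ N) :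
    ∀ N ∈ A :: l, N ⊆ l.foldl (· * ·) A := by
  induction l generalizing A with
  | nil => simp
  | cons N l ih =>
    obtain ⟨hAG, heA⟩ := hl A List.mem_cons_self
    obtain ⟨hNG, heN⟩ := hl N (by simp)
    have ih' := ih (A := A * N) <| by
      simp only [List.mem_cons, forall_eq_or_imp] at hl ⊢
      exact ⟨⟨mul_subset_maxSubgroupAt hAG hNG, he ▸ Set.mul_mem_mul heA heN⟩, hl.2.2⟩
    simp only [List.mem_cons, forall_eq_or_imp, List.foldl_cons] at ih' ⊢
    exact ⟨(subset_mul_left_of_subset_maxSubgroupAt hAG heN).trans ih'.1,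
      (subset_mul_right_of_subset_maxSubgroupAt heA hNG).trans ih'.1, ih'.2⟩

end MaxSubgroupAt

section Pointlike

variable (V : ∀ (T : Type) [Semigroup T] [Finite T], Prop) {S : Type} [Semigroup S] [Finite S]

lemma pointlike_singleton (a : S) : Pointlike V S {a} := fun _ _ _ _ r =>
  (r.nonempty a).imp fun _ ht _ hs => by rwa [Set.mem_singleton_iff.mp hs]

lemma Pointlike.mul {X Y : Set S} (hX : Pointlike V S X) (hY : Pointlike V S Y) :
    Pointlike V S (X * Y) := by
  intro T _ _ hT r
  obtain ⟨t₁, h₁⟩ := hX T hT r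
  obtain ⟨t₂, h₂⟩ := hY T hT r
  refine ⟨t₁ * t₂, ?_⟩
  rintro _ ⟨x, hx, y, hy, rfl⟩
  exact r.mul_subset x y (Set.mul_mem_mul (h₁ hx) (h₂ hy))

def IsPointlikeAt (e : S) (X : Set S) : Prop :=
  X ⊆ maxSubgroupAt S e ∧ e ∈ X ∧ Pointlike V S X

variable {V} {e : S}

lemma isPointlikeAt_singleton (he : e * e = e) : IsPointlikeAt V e {e} :=
  ⟨Set.singleton_subset_iff.mpr (mem_maxSubgroupAt_self he), rfl, pointlike_singleton V e⟩

lemma IsSubgroupOf.isPointlikeAt {N : Set S} (hN : IsSubgroupOf S N)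
    (hNG : N ⊆ maxSubgroupAt S e) (hNp : Pointlike V S N) : IsPointlikeAt V e N :=
  ⟨hNG, hN.mem_of_subset_maxSubgroupAt hNG, hNp⟩

lemma IsPointlikeAt.mul (he : e * e = e) {A B : Set S} (hA : IsPointlikeAt V e A)
    (hB : IsPointlikeAt V e B) : IsPointlikeAt V e (A * B) :=
  ⟨mul_subset_maxSubgroupAt hA.1 hB.1, he ▸ Set.mul_mem_mul hA.2.1 hB.2.1, hA.2.2.mul V hB.2.2⟩

lemma IsPointlikeAt.foldl_mul (he : e * e = e) {A : Set S} {l : List (Set S)}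
    (hA : IsPointlikeAt V e A) (hl : ∀ N ∈ l, IsPointlikeAt V e N) :
    IsPointlikeAt V e (l.foldl (· * ·) A) := by
  induction l generalizing A with
  | nil => exact hA
  | cons N l ih =>
    exact ih (hA.mul he (hl N List.mem_cons_self)) fun N' hN' => hl N' (List.mem_cons_of_mem N hN')

lemma IsPointlikeAt.conj {P : Set S} (hP : IsPointlikeAt V e P) {g y : S}
    (hg : g ∈ maxSubgroupAt S e) (hy : y ∈ maxSubgroupAt S e) (hgy : g * y = e) :
    IsPointlikeAt V e ({g} * P * {y}) := by
  refine ⟨?_, ?_, ((pointlike_singleton V g).mul V hP.2.2).mul V (pointlike_singleton V y)⟩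
  · exact mul_subset_maxSubgroupAt (mul_subset_maxSubgroupAt (by simpa using hg) hP.1)
      (by simpa using hy)
  · have hconj : g * e * y = e := by rw [hg.1, hgy]
    exact hconj ▸ Set.mul_mem_mul (Set.mul_mem_mul rfl hP.2.1) rfl

lemma isPointlikeAt_foldl_mul_singleton (he : e * e = e) {l : List (Set S)}
    (hl : ∀ N ∈ l, IsPointlikeAt V e N) :
    IsPointlikeAt V e (l.foldl (· * ·) {e}) ∧ ∀ N ∈ l, N ⊆ l.foldl (· * ·) {e} := by
  have hs := isPointlikeAt_singleton (V := V) he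
  refine ⟨hs.foldl_mul he hl, fun N hN => subset_foldl_mul_of_subset_maxSubgroupAt he ?_ N
    (List.mem_cons_of_mem _ hN)⟩
  rintro N' (_ | ⟨_, hN'⟩)
  exacts [⟨hs.1, hs.2.1⟩, ⟨(hl N' hN').1, (hl N' hN').2.1⟩]

lemma exists_isGreatest_isPointlikeAt (he : e * e = e) :
    ∃ P, IsGreatest {X | IsPointlikeAt V e X} P := by
  let l := (Set.toFinite {X | IsPointlikeAt V e X}).toFinset.toList
  have hl : ∀ X, X ∈ l ↔ IsPointlikeAt V e X := by simp [l]
  obtain ⟨hP, hmax⟩ := isPointlikeAt_foldl_mul_singleton he fun X => (hl X).mp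
  exact ⟨_, hP, fun X hX => hmax X ((hl X).mpr hX)⟩

lemma IsGreatest.isSubgroupOf_of_isPointlikeAt (he : e * e = e) {P : Set S}
    (hP : IsGreatest {X | IsPointlikeAt V e X} P) : IsSubgroupOf S P :=
  isSubgroupOf_of_mul_mem hP.1.1 hP.1.2.1 fun _ ha _ hb =>
    hP.2 (hP.1.mul he hP.1) (Set.mul_mem_mul ha hb)

lemma IsGreatest.isNormalInMaxSubgroup_of_isPointlikeAt {P : Set S}
    (hP : IsGreatest {X | IsPointlikeAt V e X} P) : IsNormalInMaxSubgroup S e P :=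
  fun _ hg _ hy hgy _ _ hm =>
    hP.2 (hP.1.conj hg hy hgy) (Set.mul_mem_mul (Set.mul_mem_mul rfl hm) rfl)

end Pointlike

/-- the maximal subgroup `G_e` at an idempotent `e` has a unique maximal
`𝒱`-pointlike subgroup `M`; it is normal in `G_e`, contains every `𝒱`-pointlike
subgroup of `G_e`, and equals the product of all normal `𝒱`-pointlike subgroups
of `G_e`. -/
theorem exists_maximal_pointlike_subgroup
    (S : Type) [Semigroup S] [Finite S]
    (V : ∀ (T : Type) [Semigroup T] [Finite T], Prop)
    (e : S) (he : e * e = e) :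
    ∃ M : Set S,
      -- `M` is a subgroup of `G_e`
      IsSubgroupOf S M ∧ M ⊆ maxSubgroupAt S e ∧
      -- `M` is `𝒱`-pointlike
      Pointlike V S M ∧
      -- `M` is normal in `G_e`
      IsNormalInMaxSubgroup S e M ∧
      -- `M` contains every `𝒱`-pointlike subgroup of `G_e`
      (∀ N : Set S, IsSubgroupOf S N → N ⊆ maxSubgroupAt S e → Pointlike V S N → N ⊆ M) ∧
      -- `M` is the product of all normal `𝒱`-pointlike subgroups of `G_e`
      (∃ l : List (Set S),
        (∀ N ∈ l, IsSubgroupOf S N ∧ N ⊆ maxSubgroupAt S e ∧ Pointlike V S N ∧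
            IsNormalInMaxSubgroup S e N) ∧
        (∀ N : Set S, IsSubgroupOf S N → N ⊆ maxSubgroupAt S e → Pointlike V S N →
            IsNormalInMaxSubgroup S e N → N ∈ l) ∧
        M = l.foldl (· * ·) ({e} : Set S)) ∧
      -- uniqueness: `M` is the unique maximal `𝒱`-pointlike subgroup of `G_e`
      (∀ M' : Set S, IsSubgroupOf S M' → M' ⊆ maxSubgroupAt S e → Pointlike V S M' →
        (∀ N : Set S, IsSubgroupOf S N → N ⊆ maxSubgroupAt S e → Pointlike V S N → N ⊆ M') →
        M' = M) := by
  obtain ⟨P, hP⟩ := exists_isGreatest_isPointlikeAt (V := V) he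
  have hPsub := hP.isSubgroupOf_of_isPointlikeAt he
  have hle : ∀ N : Set S, IsSubgroupOf S N → N ⊆ maxSubgroupAt S e → Pointlike V S N → N ⊆ P :=
    fun N hN hNG hNp => hP.2 (hN.isPointlikeAt hNG hNp)
  let l := (Set.toFinite {N | IsSubgroupOf S N ∧ N ⊆ maxSubgroupAt S e ∧ Pointlike V S N ∧
    IsNormalInMaxSubgroup S e N}).toFinset.toList
  have hl : ∀ N, N ∈ l ↔ IsSubgroupOf S N ∧ N ⊆ maxSubgroupAt S e ∧ Pointlike V S N ∧
      IsNormalInMaxSubgroup S e N := by simp [l]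
  obtain ⟨hprod, hle_prod⟩ := isPointlikeAt_foldl_mul_singleton he fun N hN =>
    let ⟨hN, hNG, hNp, _⟩ := (hl N).mp hN
    hN.isPointlikeAt hNG hNp
  have hP_mem : P ∈ l :=
    (hl P).mpr ⟨hPsub, hP.1.1, hP.1.2.2, hP.isNormalInMaxSubgroup_of_isPointlikeAt⟩
  refine ⟨P, hPsub, hP.1.1, hP.1.2.2, hP.isNormalInMaxSubgroup_of_isPointlikeAt, hle,
    ⟨l, fun N => (hl N).mp, fun N h₁ h₂ h₃ h₄ => (hl N).mpr ⟨h₁, h₂, h₃, h₄⟩,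
      (hle_prod P hP_mem).antisymm (hP.2 hprod)⟩,
    fun M' hM' hM'G hM'p hmax => (hle M' hM' hM'G hM'p).antisymm (hmax P hPsub hP.1.1 hP.1.2.2)⟩
end

section
/- Let G be a finite group, let A be a finite aperiodic semigroup, and let r be a relational morphism from G (regarded as a semigroup) to A. Then there exists an idempotent f ∈ A such that G ⊆ f r⁻¹, i.e., f ∈ r(g) for every g ∈ G. -/
open Pointwise

def IsAperiodicSemigroup (A : Type) [Semigroup A] : Prop :=
  ∀ N : Set A, IsSubgroupOf A N → N.Subsingleton

/-!
The graph of `r` is a finite subsemigroup `R` of `G × A`. Choosing an idempotent `e ∈ R` that is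
minimal, in the sense that `e` is the only idempotent of its local monoid `e R e`, makes `e R e` a
group. Its image in `A` is then a subgroup of `A`, hence the singleton `{f}` where `e = (1, f)`.
For `(g, a) ∈ R`, the element `e (g, a) e = (g, f a f)` lies in `e R e`, so `f a f = f` and
`f ∈ r(g)`.
-/

section LocalMonoid

variable {S : Type*} [Semigroup S] {e x y : S}

def localMonoid (e : S) : Set S := Set.range fun x => e * x * e

theorem mem_localMonoid_iff (he : IsIdempotentElem e) :
    x ∈ localMonoid e ↔ e * x = x ∧ x * e = x := by
  constructor
  · rintro ⟨z, rfl⟩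
    constructor
    · rw [← mul_assoc, ← mul_assoc, he.eq]
    · rw [mul_assoc, he.eq]
  · rintro ⟨hl, hr⟩
    exact ⟨x, show e * x * e = x by rw [hl, hr]⟩

theorem self_mem_localMonoid (he : IsIdempotentElem e) : e ∈ localMonoid e :=
  (mem_localMonoid_iff he).2 ⟨he.eq, he.eq⟩

theorem mul_mem_localMonoid (he : IsIdempotentElem e) (hx : x ∈ localMonoid e)
    (hy : y ∈ localMonoid e) : x * y ∈ localMonoid e := by
  rw [mem_localMonoid_iff he] at hx hy ⊢
  exact ⟨by rw [← mul_assoc, hx.1], by rw [mul_assoc, hy.2]⟩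

theorem localMonoid_subset_of_mem {e' : S} (he : IsIdempotentElem e)
    (he' : e' ∈ localMonoid e) : localMonoid e' ⊆ localMonoid e := by
  rintro _ ⟨z, rfl⟩
  obtain ⟨hl, hr⟩ := (mem_localMonoid_iff he).1 he'
  refine ⟨e' * z * e', show e * (e' * z * e') * e = e' * z * e' from ?_⟩
  rw [show e * (e' * z * e') * e = e * e' * z * (e' * e) by simp only [mul_assoc], hl, hr]

/-- `e` is minimal among the idempotents for the natural order `e' ≤ e ↔ e' ∈ e S e`. -/
def IsMinimalIdempotent (e : S) : Prop :=
  IsIdempotentElem e ∧ ∀ e' ∈ localMonoid e, IsIdempotentElem e' → e' = e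

theorem Set.Finite.exists_isIdempotentElem_mem {s : Set S} (hfin : s.Finite) (hne : s.Nonempty)
    (hmul : ∀ x ∈ s, ∀ y ∈ s, x * y ∈ s) : ∃ e ∈ s, IsIdempotentElem e := by
  let : TopologicalSpace S := ⊥
  have : DiscreteTopology S := ⟨rfl⟩
  exact exists_idempotent_in_compact_subsemigroup (fun _ => continuous_of_discreteTopology) s
    hne hfin.isCompact hmul

theorem exists_isMinimalIdempotent (S : Type*) [Semigroup S] [Finite S] [Nonempty S] :
    ∃ e : S, IsMinimalIdempotent e := by
  obtain ⟨e₀, -, he₀⟩ := (Set.finite_univ (α := S)).exists_isIdempotentElem_mem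
    Set.univ_nonempty fun _ _ _ _ => Set.mem_univ _
  obtain ⟨e, he, hmin⟩ := (Set.toFinite {e : S | IsIdempotentElem e}).exists_minimalFor
    localMonoid _ ⟨e₀, he₀⟩
  refine ⟨e, he, fun e' he'e he' => ?_⟩
  have hsub := localMonoid_subset_of_mem he he'e
  obtain ⟨hl, -⟩ := (mem_localMonoid_iff he').1 (hmin he' hsub (self_mem_localMonoid he))
  obtain ⟨-, hr⟩ := (mem_localMonoid_iff he).1 he'e
  rw [← hl, hr]

theorem IsMinimalIdempotent.exists_mul_mul_eq [Finite S] (he : IsMinimalIdempotent e)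
    (hx : x ∈ localMonoid e) : ∃ z ∈ localMonoid e, x * z * x = e := by
  -- The products `x z x` with `z ∈ e S e` form a subsemigroup of `e S e`; its idempotent is `e`.
  obtain ⟨_, ⟨z, hz, rfl⟩, hidem⟩ := (Set.toFinite ((fun z => x * z * x) '' localMonoid e))
    |>.exists_isIdempotentElem_mem ⟨_, e, self_mem_localMonoid he.1, rfl⟩ <| by
      rintro _ ⟨z, hz, rfl⟩ _ ⟨w, hw, rfl⟩
      refine ⟨z * (x * x) * w, mul_mem_localMonoid he.1
        (mul_mem_localMonoid he.1 hz (mul_mem_localMonoid he.1 hx hx)) hw, ?_⟩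
      simp only [mul_assoc]
  exact ⟨z, hz, he.2 _ (mul_mem_localMonoid he.1 (mul_mem_localMonoid he.1 hx hz) hx) hidem⟩

theorem IsMinimalIdempotent.isSubgroupOf_localMonoid {S : Type} [Semigroup S] [Finite S] {e : S}
    (he : IsMinimalIdempotent e) : IsSubgroupOf S (localMonoid e) := by
  have hmem := fun {x} => mem_localMonoid_iff (x := x) he.1
  have hmul := fun {x y} => mul_mem_localMonoid he.1 (x := x) (y := y)
  refine ⟨fun x hx y hy => hmul hx hy, e, self_mem_localMonoid he.1, fun x hx => hmem.1 hx,
    fun x hx => ?_⟩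
  obtain ⟨z, hz, hxzx⟩ := he.exists_mul_mul_eq hx
  -- `x z` is a left and `z x` a right inverse of `x` in the monoid `e S e`, so they agree.
  have hcomm : x * z = z * x := calc
    x * z = x * z * e := (hmem.1 (hmul hx hz)).2.symm
    _ = x * z * x * (z * x) := by rw [← hxzx]; simp only [mul_assoc]
    _ = z * x := by rw [hxzx, (hmem.1 (hmul hz hx)).1]
  exact ⟨z * x, hmul hz hx, by rw [← mul_assoc, hxzx], by rw [← hcomm, hxzx]⟩

end LocalMonoid

theorem IsSubgroupOf.image {S T : Type} [Semigroup S] [Semigroup T] {N : Set S}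
    (hN : IsSubgroupOf S N) (φ : S →ₙ* T) : IsSubgroupOf T (φ '' N) := by
  obtain ⟨hmul, e, heN, hid, hinv⟩ := hN
  refine ⟨?_, φ e, ⟨e, heN, rfl⟩, ?_, ?_⟩
  · rintro _ ⟨a, ha, rfl⟩ _ ⟨b, hb, rfl⟩
    exact ⟨a * b, hmul a ha b hb, map_mul φ a b⟩
  · rintro _ ⟨a, ha, rfl⟩
    simp only [← map_mul, (hid a ha).1, (hid a ha).2, and_self]
  · rintro _ ⟨a, ha, rfl⟩
    obtain ⟨b, hb, hab, hba⟩ := hinv a ha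
    exact ⟨φ b, ⟨b, hb, rfl⟩, by rw [← map_mul, hab], by rw [← map_mul, hba]⟩

def RelMorph.graph {S T : Type} [Semigroup S] [Semigroup T] (r : RelMorph S T) :
    Subsemigroup (S × T) where
  carrier := {p | p.2 ∈ r.toFun p.1}
  mul_mem' hp hq := r.mul_subset _ _ (Set.mul_mem_mul hp hq)

/-- for any relational morphism `r` from a finite group `G` to a finite
aperiodic semigroup `A`, some idempotent `f ∈ A` satisfies `G ⊆ f r⁻¹`. -/
theorem group_covered_by_idempotent_of_aperiodic
    (G : Type) [Group G] [Finite G] (A : Type) [Semigroup A] [Finite A]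
    (hA : IsAperiodicSemigroup A) (r : RelMorph G A) :
    ∃ f : A, f * f = f ∧ ∀ g : G, f ∈ r.toFun g := by
  have : Nonempty r.graph := ⟨⟨(1, _), (r.nonempty 1).some_mem⟩⟩
  obtain ⟨e, he⟩ := exists_isMinimalIdempotent r.graph
  let φ : r.graph →ₙ* A := (MulHom.snd G A).comp (MulMemClass.subtype r.graph)
  have hN : (φ '' localMonoid e).Subsingleton := hA _ (he.isSubgroupOf_localMonoid.image φ)
  have he1 : (e : G × A).1 = 1 := IsIdempotentElem.iff_eq_one.1 <|
    congrArg (fun p : r.graph => (p : G × A).1) he.1.eq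
  refine ⟨φ e, congrArg φ he.1.eq, fun g => ?_⟩
  obtain ⟨a, ha⟩ := r.nonempty g
  set y : r.graph := e * ⟨(g, a), ha⟩ * e
  have hy : φ y = φ e := hN ⟨y, ⟨_, rfl⟩, rfl⟩ ⟨e, self_mem_localMonoid he.1, rfl⟩
  have hy1 : (y : G × A).1 = g := by simp [y, he1]
  have hyR : (y : G × A).2 ∈ r.toFun (y : G × A).1 := y.2
  rwa [hy1, show (y : G × A).2 = φ e from hy] at hyR
end

section
/- Let 𝒲 be any class of finite semigroups, and let Ap⋆𝒲 denote the class of all finite semigroups T for which there exists a semigroup U ∈ 𝒲 and an aperiodic relational morphism from T to U. Then a subgroup N of a finite semigroup S is (Ap⋆𝒲)-pointlike if and only if N is 𝒲-pointlike. -/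
open Pointwise

/-- A relational morphism `θ : T → U` is aperiodic if for every idempotent `e ∈ U`
the subsemigroup `e θ⁻¹` of `T` is aperiodic, i.e. all subgroups of `T` contained
in `e θ⁻¹` are trivial. -/
def IsAperiodicRelMorph {T U : Type} [Semigroup T] [Semigroup U] (θ : RelMorph T U) : Prop :=
  ∀ e : U, e * e = e → ∀ N : Set T, N ⊆ θ.preim e → IsSubgroupOf T N → N.Subsingleton

/-- `Ap ⋆ 𝒲`: the class of finite semigroups admitting an aperiodic relational
morphism to some member of `𝒲`. -/
def ApStar (W : ∀ (U : Type) [Semigroup U] [Finite U], Prop)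
    (T : Type) [iT : Semigroup T] [Finite T] : Prop :=
  ∃ (U : Type) (iU : Semigroup U) (fU : Finite U) (θ : @RelMorph T U iT iU),
    @W U iU fU ∧ @IsAperiodicRelMorph T U iT iU θ

/-!
Since `𝒲 ⊆ Ap⋆𝒲` through identity morphisms, only one direction needs work. Let `θ : T → U` be
aperiodic with `U ∈ 𝒲`, and `r : S → T`. The `u ∈ U` with `N ⊆ u (θ r)⁻¹` form a nonempty
subsemigroup (as `N` is a group), so one of them is an idempotent `f`. The pairs `(s, t)` with
`s ∈ N`, `t ∈ r s`, `f ∈ θ t` form a subsemigroup of `S × T` lying over the group `N`; a minimal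
such subsemigroup is a group, so its projection to `T` is a subgroup inside `f θ⁻¹`, hence a
single point `t`, and `N ⊆ t r⁻¹`.
-/

section SemigroupFacts

variable {X Y : Type} [Semigroup X] [Semigroup Y]

theorem exists_idempotent_of_mul_closed [Finite X] (s : Set X) (hs : s.Nonempty)
    (hmul : ∀ a ∈ s, ∀ b ∈ s, a * b ∈ s) : ∃ f ∈ s, f * f = f := by
  let : TopologicalSpace X := ⊥
  have : DiscreteTopology X := ⟨rfl⟩
  exact exists_idempotent_in_compact_subsemigroup (fun _ => continuous_of_discreteTopology) s hs
    s.toFinite.isCompact hmul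

theorem isSubgroupOf_of_exists_mul_eq {M : Set X} (hne : M.Nonempty)
    (hmul : ∀ a ∈ M, ∀ b ∈ M, a * b ∈ M)
    (hl : ∀ a ∈ M, ∀ b ∈ M, ∃ c ∈ M, a * c = b)
    (hr : ∀ a ∈ M, ∀ b ∈ M, ∃ c ∈ M, c * a = b) : IsSubgroupOf X M := by
  obtain ⟨a, ha⟩ := hne
  obtain ⟨e, he, hae⟩ := hl a ha a ha
  have mul_e : ∀ b ∈ M, b * e = b := by
    intro b hb
    obtain ⟨c, -, rfl⟩ := hr a ha b hb
    rw [mul_assoc, hae]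
  obtain ⟨e', he', hea⟩ := hr a ha a ha
  have e'_mul : ∀ b ∈ M, e' * b = b := by
    intro b hb
    obtain ⟨c, -, rfl⟩ := hl a ha b hb
    rw [← mul_assoc, hea]
  have hee : e' = e := by rw [← mul_e e' he', e'_mul e he]
  subst hee
  refine ⟨hmul, e', he, fun b hb => ⟨e'_mul b hb, mul_e b hb⟩, fun b hb => ?_⟩
  obtain ⟨c, hc, hbc⟩ := hl b hb e' he
  obtain ⟨c', hc', hcb⟩ := hr b hb e' he
  have hcc : c' = c := by rw [← mul_e c' hc', ← hbc, ← mul_assoc, hcb, e'_mul c hc]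
  exact ⟨c, hc, hbc, hcc ▸ hcb⟩

namespace IsSubgroupOf

variable {N : Set X}

theorem nonempty (hN : IsSubgroupOf X N) : N.Nonempty :=
  let ⟨e, he, _⟩ := hN.2
  ⟨e, he⟩

theorem image_mul_left (hN : IsSubgroupOf X N) {g : X} (hg : g ∈ N) : (g * ·) '' N = N := by
  obtain ⟨hmul, e, -, hid, hinv⟩ := hN
  refine Set.Subset.antisymm (Set.image_subset_iff.2 fun s hs => hmul g hg s hs) fun s hs => ?_
  obtain ⟨b, hb, hgb, -⟩ := hinv g hg
  exact ⟨b * s, hmul b hb s hs, by simp only [← mul_assoc, hgb, (hid s hs).1]⟩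

theorem image_mul_right (hN : IsSubgroupOf X N) {g : X} (hg : g ∈ N) : (· * g) '' N = N := by
  obtain ⟨hmul, e, -, hid, hinv⟩ := hN
  refine Set.Subset.antisymm (Set.image_subset_iff.2 fun s hs => hmul s hs g hg) fun s hs => ?_
  obtain ⟨b, hb, -, hbg⟩ := hinv g hg
  exact ⟨s * b, hmul s hs b hb, by simp only [mul_assoc, hbg, (hid s hs).2]⟩

theorem image_s5 (hN : IsSubgroupOf X N) (φ : X →ₙ* Y) : IsSubgroupOf Y (φ '' N) := by
  obtain ⟨hmul, e, he, hid, hinv⟩ := hN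
  refine ⟨?_, φ e, ⟨e, he, rfl⟩, ?_, ?_⟩
  · rintro _ ⟨a, ha, rfl⟩ _ ⟨b, hb, rfl⟩
    exact ⟨a * b, hmul a ha b hb, map_mul φ a b⟩
  · rintro _ ⟨a, ha, rfl⟩
    simp only [← map_mul, (hid a ha).1, (hid a ha).2, and_self]
  · rintro _ ⟨a, ha, rfl⟩
    obtain ⟨b, hb, hab, hba⟩ := hinv a ha
    exact ⟨φ b, ⟨b, hb, rfl⟩, by rw [← map_mul, hab], by rw [← map_mul, hba]⟩

end IsSubgroupOf

theorem exists_isSubgroupOf_subset_image_eq [Finite X] (φ : X →ₙ* Y) {N : Set Y}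
    (hN : IsSubgroupOf Y N) {R : Set X} (hR : ∀ a ∈ R, ∀ b ∈ R, a * b ∈ R) (hRN : φ '' R = N) :
    ∃ M ⊆ R, IsSubgroupOf X M ∧ φ '' M = N := by
  let P : Set X → Prop := fun M => (∀ a ∈ M, ∀ b ∈ M, a * b ∈ M) ∧ φ '' M = N
  obtain ⟨M, hMR, hM⟩ := exists_minimal_le_of_wellFoundedLT P R ⟨hR, hRN⟩
  obtain ⟨hMmul, hMN⟩ := hM.prop
  have mul_left_onto : ∀ a ∈ M, (a * ·) '' M = M := fun a ha => by
    refine hM.eq_of_subset ⟨?_, ?_⟩ (Set.image_subset_iff.2 fun q hq => hMmul a ha q hq)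
    · rintro _ ⟨q, hq, rfl⟩ _ ⟨q', hq', rfl⟩
      exact ⟨q * (a * q'), hMmul q hq _ (hMmul a ha q' hq'), (mul_assoc a q _).symm⟩
    · simp only [Set.image_image, map_mul]
      rw [← Set.image_image (φ a * ·) φ, hMN, hN.image_mul_left (hMN ▸ Set.mem_image_of_mem φ ha)]
  have mul_right_onto : ∀ a ∈ M, (· * a) '' M = M := fun a ha => by
    refine hM.eq_of_subset ⟨?_, ?_⟩ (Set.image_subset_iff.2 fun q hq => hMmul q hq a ha)
    · rintro _ ⟨q, hq, rfl⟩ _ ⟨q', hq', rfl⟩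
      exact ⟨q * a * q', hMmul _ (hMmul q hq a ha) q' hq', by simp only [mul_assoc]⟩
    · simp only [Set.image_image, map_mul]
      rw [← Set.image_image (· * φ a) φ, hMN, hN.image_mul_right (hMN ▸ Set.mem_image_of_mem φ ha)]
  have hMne : M.Nonempty := by simpa [← hMN] using hN.nonempty
  refine ⟨M, hMR, isSubgroupOf_of_exists_mul_eq hMne hMmul ?_ ?_, hMN⟩
  · intro a ha b hb
    rwa [← mul_left_onto a ha] at hb
  · intro a ha b hb
    rwa [← mul_right_onto a ha] at hb

end SemigroupFacts

namespace RelMorph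

variable {S T U : Type} [Semigroup S] [Semigroup T] [Semigroup U]

def comp (θ : RelMorph T U) (r : RelMorph S T) : RelMorph S U where
  toFun s := ⋃ t ∈ r.toFun s, θ.toFun t
  nonempty s := by
    obtain ⟨t, ht⟩ := r.nonempty s
    obtain ⟨u, hu⟩ := θ.nonempty t
    exact ⟨u, Set.mem_biUnion ht hu⟩
  mul_subset s₁ s₂ := by
    rintro _ ⟨a, ha, b, hb, rfl⟩
    simp only [Set.mem_iUnion₂] at ha hb ⊢
    obtain ⟨t₁, ht₁, ha⟩ := ha
    obtain ⟨t₂, ht₂, hb⟩ := hb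
    exact ⟨t₁ * t₂, r.mul_subset s₁ s₂ (Set.mul_mem_mul ht₁ ht₂),
      θ.mul_subset t₁ t₂ (Set.mul_mem_mul ha hb)⟩

theorem mem_comp_preim {θ : RelMorph T U} {r : RelMorph S T} {u : U} {s : S} :
    s ∈ (θ.comp r).preim u ↔ ∃ t ∈ r.toFun s, u ∈ θ.toFun t := by
  simp only [preim, comp, Set.mem_ofPred_eq, Set.mem_iUnion₂, exists_prop]

protected def id (T : Type) [Semigroup T] : RelMorph T T where
  toFun t := {t}
  nonempty t := ⟨t, rfl⟩
  mul_subset s₁ s₂ := by simp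

theorem isAperiodicRelMorph_id : IsAperiodicRelMorph (RelMorph.id T) :=
  fun _ _ _ hM _ _ ha _ hb => (hM ha).symm.trans (hM hb)

theorem subset_preim_mul_s5 {N : Set S} (hN : IsSubgroupOf S N) (ρ : RelMorph S U)
    {v w : U} (hv : N ⊆ ρ.preim v) (hw : N ⊆ ρ.preim w) : N ⊆ ρ.preim (v * w) := by
  obtain ⟨-, e, he, hid, -⟩ := hN
  intro s hs
  have h := ρ.mul_subset s e (Set.mul_mem_mul (hv hs) (hw he))
  rwa [(hid s hs).2] at h

theorem exists_subset_preim_of_subset_comp_preim [Finite S] [Finite T] (r : RelMorph S T)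
    {θ : RelMorph T U} (hθ : IsAperiodicRelMorph θ) {N : Set S} (hN : IsSubgroupOf S N)
    {f : U} (hf : f * f = f) (hNf : N ⊆ (θ.comp r).preim f) : ∃ t, N ⊆ r.preim t := by
  let R : Set (S × T) := {p | p.1 ∈ N ∧ p.2 ∈ r.toFun p.1 ∧ f ∈ θ.toFun p.2}
  have hRmul : ∀ p ∈ R, ∀ q ∈ R, p * q ∈ R := by
    rintro p ⟨hp₁, hp₂, hp₃⟩ q ⟨hq₁, hq₂, hq₃⟩
    refine ⟨hN.1 _ hp₁ _ hq₁, r.mul_subset _ _ (Set.mul_mem_mul hp₂ hq₂), ?_⟩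
    exact hf ▸ θ.mul_subset _ _ (Set.mul_mem_mul hp₃ hq₃)
  have hRN : Prod.fst '' R = N := by
    refine Set.Subset.antisymm (Set.image_subset_iff.2 fun p hp => hp.1) fun s hs => ?_
    obtain ⟨t, hts, hft⟩ := mem_comp_preim.1 (hNf hs)
    exact ⟨(s, t), ⟨hs, hts, hft⟩, rfl⟩
  obtain ⟨M, hMR, hM, hMN⟩ := exists_isSubgroupOf_subset_image_eq (MulHom.fst S T) hN hRmul hRN
  have htriv : (Prod.snd '' M).Subsingleton :=
    hθ f hf _ (Set.image_subset_iff.2 fun p hp => (hMR hp).2.2) (hM.image_s5 (MulHom.snd S T))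
  obtain ⟨p₀, hp₀⟩ := hM.nonempty
  refine ⟨p₀.2, fun s hs => ?_⟩
  obtain ⟨p, hp, rfl⟩ : s ∈ Prod.fst '' M := (hMN.symm ▸ hs : _)
  rw [show p₀.2 = p.2 from htriv ⟨p₀, hp₀, rfl⟩ ⟨p, hp, rfl⟩]
  exact (hMR hp).2.1

end RelMorph

/-- a subgroup `N` of a finite semigroup `S` is `(Ap⋆𝒲)`-pointlike
if and only if it is `𝒲`-pointlike. -/
theorem subgroup_apstar_pointlike_iff
    (W : ∀ (U : Type) [Semigroup U] [Finite U], Prop)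
    (S : Type) [Semigroup S] [Finite S]
    (N : Set S) (hN : IsSubgroupOf S N) :
    Pointlike (ApStar W) S N ↔ Pointlike W S N := by
  constructor
  · intro h T _ _ hT
    exact h T ⟨T, _, _, RelMorph.id T, hT, RelMorph.isAperiodicRelMorph_id⟩
  · rintro h T _ _ ⟨U, _, _, θ, hU, hθ⟩ r
    obtain ⟨f, hNf, hf⟩ := exists_idempotent_of_mul_closed {v | N ⊆ (θ.comp r).preim v}
      (h U hU (θ.comp r)) fun v hv w hw => RelMorph.subset_preim_mul_s5 hN _ hv hw
    exact r.exists_subset_preim_of_subset_comp_preim hθ hN hf hNf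
end

section
/- Let G be a finite group and B a finite set, and let G act on G × B by g·(h,b) = (gh,b). Let Y ⊆ G × B and let Π be a partition of Y (a collection of nonempty, pairwise disjoint subsets of Y whose union is Y); G acts on such pairs by g·(Y,Π) = (gY, {gπ : π ∈ Π}). Then (Y,Π) is invariant, i.e., g·(Y,Π) = (Y,Π) for all g ∈ G, if and only if: Y = G × B' for some subset B' ⊆ B, and for every class π ∈ Π the orbit Gπ = {gπ : g ∈ G} is contained in Π and is a partition of G × B'' for some subset B'' ⊆ B'. -/
/-- The left `G`-action on subsets of `G × B`: `g · Y = {(g h, b) : (h, b) ∈ Y}`. -/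
def gAct {G B : Type} [Mul G] (g : G) (Y : Set (G × B)) : Set (G × B) :=
  (fun p : G × B => (g * p.1, p.2)) '' Y

/-- `C` is a partition of `Y`: a collection of nonempty pairwise disjoint sets
whose union is `Y`. -/
def IsPartitionOf {α : Type} (C : Set (Set α)) (Y : Set α) : Prop :=
  (∀ c ∈ C, c.Nonempty) ∧ C.PairwiseDisjoint id ∧ ⋃₀ C = Y

/-! Since `G` acts simply transitively on the first factor, the orbit of a set `π ⊆ G × B`
sweeps out exactly `G × π₂`, where `π₂` is the projection of `π` to `B`. Hence an invariant
set has the form `G × B'`, and an orbit contained in a partition is itself a partition of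
`G × π₂`. Conversely, a collection closed under the action is mapped onto itself, because
`g⁻¹` provides preimages. -/

lemma IsPartitionOf.of_subset {α : Type} {P C : Set (Set α)} {Y : Set α}
    (hP : IsPartitionOf P Y) (hC : C ⊆ P) : IsPartitionOf C (⋃₀ C) :=
  ⟨fun c hc => hP.1 c (hC hc), hP.2.1.subset hC, rfl⟩

section gAct

variable {G B : Type} [Group G]

lemma mem_gAct {g : G} {S : Set (G × B)} {p : G × B} :
    p ∈ gAct g S ↔ (g⁻¹ * p.1, p.2) ∈ S := by
  constructor
  · rintro ⟨⟨h, b⟩, hq, rfl⟩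
    simpa using hq
  · intro hq
    exact ⟨_, hq, by simp⟩

lemma gAct_gAct (g h : G) (S : Set (G × B)) : gAct g (gAct h S) = gAct (g * h) S := by
  ext p
  simp [mem_gAct, mul_assoc]

lemma gAct_one (S : Set (G × B)) : gAct (1 : G) S = S := by
  ext p
  simp [mem_gAct]

lemma gAct_setOf_snd_mem (g : G) (B' : Set B) :
    gAct g {p : G × B | p.2 ∈ B'} = {p | p.2 ∈ B'} := by
  ext p
  exact mem_gAct

lemma sUnion_range_gAct (S : Set (G × B)) :
    ⋃₀ Set.range (fun g : G => gAct g S) = {p | p.2 ∈ Prod.snd '' S} := by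
  ext p
  simp only [Set.sUnion_range, Set.mem_iUnion, mem_gAct, Set.mem_ofPred_eq, Set.mem_image]
  constructor
  · rintro ⟨g, hp⟩
    exact ⟨_, hp, rfl⟩
  · rintro ⟨⟨h, b⟩, hq, rfl⟩
    exact ⟨p.1 * h⁻¹, by simpa using hq⟩

lemma eq_setOf_snd_mem_of_forall_gAct_eq {S : Set (G × B)} (hS : ∀ g : G, gAct g S = S) :
    S = {p | p.2 ∈ Prod.snd '' S} := by
  have hrange : Set.range (fun g : G => gAct g S) = {S} := by
    simp only [hS, Set.range_const]
  rw [← sUnion_range_gAct, hrange, Set.sUnion_singleton]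

lemma image_gAct_eq_of_forall_range_subset {P : Set (Set (G × B))}
    (hP : ∀ π ∈ P, Set.range (fun g : G => gAct g π) ⊆ P) (g : G) : gAct g '' P = P := by
  apply subset_antisymm
  · rintro _ ⟨π, hπ, rfl⟩
    exact hP π hπ ⟨g, rfl⟩
  · intro π hπ
    refine ⟨gAct g⁻¹ π, hP π hπ ⟨g⁻¹, rfl⟩, ?_⟩
    rw [gAct_gAct, mul_inv_cancel, gAct_one]

end gAct

theorem invariant_set_partition_iff_general
    (G B : Type) [Group G]
    (Y : Set (G × B)) (P : Set (Set (G × B)))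
    (hP : IsPartitionOf P Y) :
    (∀ g : G, gAct g Y = Y ∧ (gAct g) '' P = P)
      ↔
    (∃ B' : Set B, Y = {p : G × B | p.2 ∈ B'} ∧
      ∀ π ∈ P,
        Set.range (fun g : G => gAct g π) ⊆ P ∧
        ∃ B'' : Set B, B'' ⊆ B' ∧
          IsPartitionOf (Set.range fun g : G => gAct g π)
            {p : G × B | p.2 ∈ B''}) := by
  constructor
  · intro hinv
    refine ⟨Prod.snd '' Y, eq_setOf_snd_mem_of_forall_gAct_eq fun g => (hinv g).1,
      fun π hπ => ?_⟩
    have horbit : Set.range (fun g : G => gAct g π) ⊆ P := by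
      rintro _ ⟨g, rfl⟩
      exact (hinv g).2 ▸ Set.mem_image_of_mem _ hπ
    have hπY : π ⊆ Y := hP.2.2 ▸ Set.subset_sUnion_of_mem hπ
    exact ⟨horbit, Prod.snd '' π, Set.image_mono hπY,
      sUnion_range_gAct π ▸ hP.of_subset horbit⟩
  · rintro ⟨B', rfl, horbit⟩ g
    exact ⟨gAct_setOf_snd_mem g B', image_gAct_eq_of_forall_range_subset
      (fun π hπ => (horbit π hπ).1) g⟩

/-- a set-partition pair `(Y, P)` on `G × B` is `G`-invariant iff
`Y = G × B'` for some `B' ⊆ B` and for every class `π ∈ P` the orbit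
`Gπ` is contained in `P` and partitions `G × B''` for some `B'' ⊆ B'`. -/
theorem invariant_set_partition_iff
    (G B : Type) [Group G] [Finite G] [Finite B]
    (Y : Set (G × B)) (P : Set (Set (G × B)))
    (hP : IsPartitionOf P Y) :
    (∀ g : G, gAct g Y = Y ∧ (gAct g) '' P = P)
      ↔
    (∃ B' : Set B, Y = {p : G × B | p.2 ∈ B'} ∧
      ∀ π ∈ P,
        Set.range (fun g : G => gAct g π) ⊆ P ∧
        ∃ B'' : Set B, B'' ⊆ B' ∧
          IsPartitionOf (Set.range fun g : G => gAct g π)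
            {p : G × B | p.2 ∈ B''}) :=
  invariant_set_partition_iff_general G B Y P hP
end
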